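/- Let k ≥ 7 and let H be a graph obtained from the cycle C_k by attaching to each cycle vertex at most one new pendant vertex (a new vertex of degree 1 adjacent only to that cycle vertex). Then KB(H) is isomorphic to KB(C_k). -/

import Mathlib

open SimpleGraph

variable {V : Type}

/-- `B1`, `B2` are the two (nonempty) parts of an induced complete bipartite subgraph:
they are disjoint, each part is independent, and all edges between the parts are present. -/
def IsCBP (H : SimpleGraph V) (B1 B2 : Set V) : Prop :=
  B1.Nonempty ∧ B2.Nonempty ∧ Disjoint B1 B2 ∧
    (∀ a ∈ B1, ∀ b ∈ B1, ¬H.Adj a b) ∧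
    (∀ a ∈ B2, ∀ b ∈ B2, ¬H.Adj a b) ∧
    (∀ a ∈ B1, ∀ b ∈ B2, H.Adj a b)

/-- A set of vertices inducing a complete bipartite subgraph `K_{m,n}`, `m, n ≥ 1`. -/
def IsCompleteBipartiteSet (H : SimpleGraph V) (S : Set V) : Prop :=
  ∃ B1 B2 : Set V, IsCBP H B1 B2 ∧ B1 ∪ B2 = S

/-- A biclique: a maximal set of vertices inducing a complete bipartite subgraph. -/
def IsBiclique (H : SimpleGraph V) (S : Set V) : Prop :=
  IsCompleteBipartiteSet H S ∧
    ∀ T : Set V, IsCompleteBipartiteSet H T → S ⊆ T → S = T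

/-- The biclique graph `KB(H)`: the intersection graph of the bicliques of `H`. -/
def KB (H : SimpleGraph V) : SimpleGraph {S : Set V // IsBiclique H S} :=
  SimpleGraph.fromRel fun A B => (A.1 ∩ B.1).Nonempty

/-- The cycle `C_k` on vertex set `ZMod k`, `i` adjacent to `j` iff `i - j ≡ ±1 (mod k)`. -/
def cycle (k : ℕ) : SimpleGraph (ZMod k) :=
  SimpleGraph.fromRel fun i j => i = j + 1

/-- The graph obtained from `C_k` by attaching, to each cycle vertex `i ∈ P`, one new
pendant vertex `Sum.inr ⟨i, _⟩` adjacent only to `i` (so each cycle vertex gets at most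
one pendant). -/
def pendantCycle (k : ℕ) (P : Set (ZMod k)) : SimpleGraph (ZMod k ⊕ P) :=
  SimpleGraph.fromRel fun p q =>
    match p, q with
    | Sum.inl i, Sum.inl j => i = j + 1
    | Sum.inl i, Sum.inr j => i = j.1
    | _, _ => False

/-!
For `k ≥ 5` both graphs are triangle-free and contain no `4`-cycle. Without `4`-cycles an induced
`K_{m,n}` must have `m = 1` or `n = 1`, so it is a star and lies in a closed neighbourhood `N[v]`;
without triangles `N[v]` itself induces a star. Hence the bicliques are the closed neighbourhoods
that are maximal among closed neighbourhoods. In `C_k` these are all the `N[i]`; in `H` they are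
the `N[i]` of the cycle vertices, because the closed neighbourhood of a pendant vertex lies in that
of its attachment vertex. Finally `N_H[i] ↦ N_{C_k}[i]` preserves intersections, since a pendant
vertex lies in only one `N_H[i]`.
-/

def SimpleGraph.closedNbhd (G : SimpleGraph V) (v : V) : Set V := insert v (G.neighborSet v)

def SimpleGraph.FourCycleFree (G : SimpleGraph V) : Prop :=
  ∀ ⦃u w⦄, u ≠ w → (G.commonNeighbors u w).Subsingleton

section Stars

variable {G : SimpleGraph V} {B₁ B₂ S : Set V} {v : V}

lemma IsCBP.symm (h : IsCBP G B₁ B₂) : IsCBP G B₂ B₁ := by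
  obtain ⟨h₁, h₂, hdisj, hind₁, hind₂, hadj⟩ := h
  exact ⟨h₂, h₁, hdisj.symm, hind₂, hind₁, fun a ha b hb => (hadj b hb a ha).symm⟩

lemma IsCBP.subset_neighborSet (h : IsCBP G {v} B₂) : B₂ ⊆ G.neighborSet v :=
  fun _ hb => h.2.2.2.2.2 v rfl _ hb

lemma IsCBP.subsingleton_or_subsingleton (hG : G.FourCycleFree) (h : IsCBP G B₁ B₂) :
    B₁.Subsingleton ∨ B₂.Subsingleton := by
  by_contra! hcon
  obtain ⟨⟨a, ha, a', ha', haa'⟩, ⟨b, hb, b', hb', hbb'⟩⟩ := hcon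
  have hadj := h.2.2.2.2.2
  exact hbb' (hG haa' ⟨hadj a ha b hb, hadj a' ha' b hb⟩
    ⟨hadj a ha b' hb', hadj a' ha' b' hb'⟩)

lemma IsCompleteBipartiteSet.exists_subset_closedNbhd (hG : G.FourCycleFree)
    (hS : IsCompleteBipartiteSet G S) :
    ∃ v, (G.neighborSet v).Nonempty ∧ S ⊆ G.closedNbhd v := by
  have star : ∀ {B₁ B₂ : Set V}, IsCBP G B₁ B₂ → B₁.Subsingleton →
      ∃ v, (G.neighborSet v).Nonempty ∧ B₁ ∪ B₂ ⊆ G.closedNbhd v := by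
    intro B₁ B₂ h hB₁
    obtain ⟨v, hv⟩ := h.1
    obtain rfl := hB₁.eq_singleton_of_mem hv
    refine ⟨v, h.2.1.mono h.subset_neighborSet, ?_⟩
    rw [Set.singleton_union]
    exact Set.insert_subset_insert h.subset_neighborSet
  obtain ⟨B₁, B₂, h, rfl⟩ := hS
  rcases h.subsingleton_or_subsingleton hG with hB | hB
  · exact star h hB
  · rw [Set.union_comm]
    exact star h.symm hB

lemma isCompleteBipartiteSet_closedNbhd (h3 : G.CliqueFree 3) (hv : (G.neighborSet v).Nonempty) :
    IsCompleteBipartiteSet G (G.closedNbhd v) := by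
  classical
  refine ⟨{v}, G.neighborSet v, ⟨Set.singleton_nonempty v, hv, ?_, ?_, ?_, ?_⟩,
    Set.singleton_union⟩
  · exact Set.disjoint_singleton_left.2 G.notMem_neighborSet_self
  · rintro a rfl b rfl
    exact G.irrefl
  · exact fun a ha b hb hab => h3 {v, a, b} (is3Clique_triple_iff.2 ⟨ha, hb, hab⟩)
  · rintro a rfl b hb
    exact hb

lemma isBiclique_closedNbhd (h3 : G.CliqueFree 3) (hG : G.FourCycleFree)
    (hv : (G.neighborSet v).Nonempty) (hmax : ∀ w, G.closedNbhd v ⊆ G.closedNbhd w → v = w) :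
    IsBiclique G (G.closedNbhd v) := by
  refine ⟨isCompleteBipartiteSet_closedNbhd h3 hv, fun T hT hsub => hsub.antisymm ?_⟩
  obtain ⟨w, -, hTw⟩ := hT.exists_subset_closedNbhd hG
  rwa [hmax w (hsub.trans hTw)]

lemma IsBiclique.exists_eq_closedNbhd (h3 : G.CliqueFree 3) (hG : G.FourCycleFree)
    (hS : IsBiclique G S) : ∃ v, S = G.closedNbhd v := by
  obtain ⟨v, hv, hSv⟩ := hS.1.exists_subset_closedNbhd hG
  exact ⟨v, hS.2 _ (isCompleteBipartiteSet_closedNbhd h3 hv) hSv⟩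

end Stars

section BicliqueGraph

variable {W α : Type} {G : SimpleGraph V} {H : SimpleGraph W}

lemma KB_adj {A B : {S : Set V // IsBiclique G S}} :
    (KB G).Adj A B ↔ A ≠ B ∧ (A.1 ∩ B.1).Nonempty := by
  simp [KB, Set.inter_comm]

noncomputable def bicliqueEquiv {f : α → Set V} (hf : f.Injective)
    (hGf : ∀ S, IsBiclique G S ↔ ∃ a, S = f a) : α ≃ {S : Set V // IsBiclique G S} :=
  Equiv.ofBijective (fun a => ⟨f a, (hGf _).2 ⟨a, rfl⟩⟩)
    ⟨fun _ _ h => hf (congrArg Subtype.val h), fun S =>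
      let ⟨a, ha⟩ := (hGf S.1).1 S.2
      ⟨a, Subtype.ext ha.symm⟩⟩

lemma nonempty_KB_iso_of_parametrization {f : α → Set V} {g : α → Set W}
    (hf : f.Injective) (hg : g.Injective)
    (hGf : ∀ S, IsBiclique G S ↔ ∃ a, S = f a)
    (hHg : ∀ S, IsBiclique H S ↔ ∃ a, S = g a)
    (hfg : ∀ a b, (f a ∩ f b).Nonempty ↔ (g a ∩ g b).Nonempty) :
    Nonempty (KB G ≃g KB H) := by
  let eG := bicliqueEquiv hf hGf
  let eH := bicliqueEquiv hg hHg
  refine ⟨⟨eG.symm.trans eH, fun {A B} => ?_⟩⟩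
  obtain ⟨a, rfl⟩ := eG.surjective A
  obtain ⟨b, rfl⟩ := eG.surjective B
  simp only [Equiv.trans_apply, Equiv.symm_apply_apply, KB_adj, ne_eq, eG.injective.eq_iff,
    eH.injective.eq_iff]
  exact and_congr_right' (hfg a b).symm

end BicliqueGraph

lemma ZMod.natCast_ne_zero_of_lt {k n : ℕ} (h0 : 0 < n) (hn : n < k) : (n : ZMod k) ≠ 0 := by
  rw [Ne, ZMod.natCast_eq_zero_iff]
  exact Nat.not_dvd_of_pos_of_lt h0 hn

section Cycle

variable {k : ℕ} {i j : ZMod k}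

lemma cycle_adj (hk : 2 ≤ k) : (cycle k).Adj i j ↔ j = i - 1 ∨ j = i + 1 := by
  have h1 : (1 : ZMod k) ≠ 0 := by exact_mod_cast ZMod.natCast_ne_zero_of_lt one_pos hk
  simp only [cycle, fromRel_adj]
  grind

lemma mem_cycle_closedNbhd (hk : 2 ≤ k) :
    j ∈ (cycle k).closedNbhd i ↔ j = i ∨ j = i - 1 ∨ j = i + 1 := by
  simp only [closedNbhd, Set.mem_insert_iff, mem_neighborSet, cycle_adj hk]

lemma cycle_cliqueFree_three (hk : 4 ≤ k) : (cycle k).CliqueFree 3 := by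
  have h2 : (2 : ZMod k) ≠ 0 := by exact_mod_cast ZMod.natCast_ne_zero_of_lt two_pos (by omega)
  have h3 : (3 : ZMod k) ≠ 0 := by exact_mod_cast ZMod.natCast_ne_zero_of_lt three_pos (by omega)
  intro s hs
  obtain ⟨a, b, c, hab, hac, hbc, -⟩ := is3Clique_iff.1 hs
  rw [cycle_adj (by omega)] at hab hac hbc
  grind

lemma cycle_fourCycleFree (hk : 5 ≤ k) : (cycle k).FourCycleFree := by
  intro i j hij
  have h4 : (4 : ZMod k) ≠ 0 := by exact_mod_cast ZMod.natCast_ne_zero_of_lt four_pos (by omega)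
  rintro w ⟨hiw, hjw⟩ w' ⟨hiw', hjw'⟩
  rw [mem_neighborSet, cycle_adj (by omega)] at hiw hjw hiw' hjw'
  grind

lemma cycle_eq_of_closedNbhd_subset (hk : 4 ≤ k)
    (h : (cycle k).closedNbhd i ⊆ (cycle k).closedNbhd j) : i = j := by
  have h1 : (1 : ZMod k) ≠ 0 := by exact_mod_cast ZMod.natCast_ne_zero_of_lt one_pos (by omega)
  have h2 : (2 : ZMod k) ≠ 0 := by exact_mod_cast ZMod.natCast_ne_zero_of_lt two_pos (by omega)
  have h3 : (3 : ZMod k) ≠ 0 := by exact_mod_cast ZMod.natCast_ne_zero_of_lt three_pos (by omega)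
  simp only [Set.subset_def, mem_cycle_closedNbhd (by omega : 2 ≤ k)] at h
  have := h i (by simp)
  have := h (i - 1) (by simp)
  have := h (i + 1) (by simp)
  grind

lemma isBiclique_cycle_iff (hk : 5 ≤ k) {S : Set (ZMod k)} :
    IsBiclique (cycle k) S ↔ ∃ i, S = (cycle k).closedNbhd i := by
  have h3 := cycle_cliqueFree_three (by omega : 4 ≤ k)
  have hG := cycle_fourCycleFree hk
  refine ⟨IsBiclique.exists_eq_closedNbhd h3 hG, ?_⟩
  rintro ⟨i, rfl⟩
  exact isBiclique_closedNbhd h3 hG ⟨i + 1, (cycle_adj (by omega)).2 (Or.inr rfl)⟩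
    fun _ => cycle_eq_of_closedNbhd_subset (by omega)

end Cycle

section PendantCycle

variable {k : ℕ} {P : Set (ZMod k)} {i j : ZMod k}

lemma pendantCycle_adj_inl_inl :
    (pendantCycle k P).Adj (.inl i) (.inl j) ↔ (cycle k).Adj i j := by
  simp [pendantCycle, cycle]

lemma pendantCycle_adj_inr_left {p : P} {x : ZMod k ⊕ P} :
    (pendantCycle k P).Adj (.inr p) x ↔ x = .inl p.1 := by
  cases x <;> simp [pendantCycle, eq_comm]

lemma pendantCycle_adj_inr_right {p : P} {x : ZMod k ⊕ P} :
    (pendantCycle k P).Adj x (.inr p) ↔ x = .inl p.1 := by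
  rw [adj_comm, pendantCycle_adj_inr_left]

lemma preimage_inl_pendantCycle_closedNbhd :
    Sum.inl ⁻¹' (pendantCycle k P).closedNbhd (.inl i) = (cycle k).closedNbhd i := by
  ext x
  simp [closedNbhd, pendantCycle_adj_inl_inl]

lemma inr_mem_pendantCycle_closedNbhd {p : P} :
    .inr p ∈ (pendantCycle k P).closedNbhd (.inl i) ↔ p.1 = i := by
  simp [closedNbhd, pendantCycle_adj_inr_right, eq_comm]

lemma pendantCycle_closedNbhd_inr_subset (p : P) :
    (pendantCycle k P).closedNbhd (.inr p) ⊆ (pendantCycle k P).closedNbhd (.inl p.1) := by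
  rintro x (rfl | hx)
  · exact Set.mem_insert_of_mem _ (pendantCycle_adj_inr_right.2 rfl)
  · rw [mem_neighborSet, pendantCycle_adj_inr_left] at hx
    exact hx ▸ Set.mem_insert _ _

lemma pendantCycle_cliqueFree_three (hk : 4 ≤ k) : (pendantCycle k P).CliqueFree 3 := by
  have inl_of_adj : ∀ x y z : ZMod k ⊕ P, (pendantCycle k P).Adj x y →
      (pendantCycle k P).Adj x z → (pendantCycle k P).Adj y z → ∃ c, x = .inl c := by
    rintro (c | p) y z hxy hxz hyz
    · exact ⟨c, rfl⟩
    · rw [pendantCycle_adj_inr_left] at hxy hxz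
      subst hxy hxz
      exact absurd hyz (pendantCycle k P).irrefl
  intro s hs
  obtain ⟨a, b, c, hab, hac, hbc, -⟩ := is3Clique_iff.1 hs
  obtain ⟨a, rfl⟩ := inl_of_adj _ _ _ hab hac hbc
  obtain ⟨b, rfl⟩ := inl_of_adj _ _ _ hab.symm hbc hac
  obtain ⟨c, rfl⟩ := inl_of_adj _ _ _ hac.symm hbc.symm hab
  rw [pendantCycle_adj_inl_inl] at hab hac hbc
  classical
  exact cycle_cliqueFree_three hk {a, b, c} (is3Clique_triple_iff.2 ⟨hab, hac, hbc⟩)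

lemma pendantCycle_fourCycleFree (hk : 5 ≤ k) : (pendantCycle k P).FourCycleFree := by
  intro u v huv
  have hinl : ∀ {x}, (pendantCycle k P).Adj u x → (pendantCycle k P).Adj v x →
      ∃ c, x = .inl c := by
    rintro (c | r) hu hv
    · exact ⟨c, rfl⟩
    · rw [pendantCycle_adj_inr_right] at hu hv
      exact absurd (hu.trans hv.symm) huv
  rintro w ⟨huw, hvw⟩ w' ⟨huw', hvw'⟩
  obtain ⟨c, rfl⟩ := hinl huw hvw
  obtain ⟨c', rfl⟩ := hinl huw' hvw'
  rcases u with a | p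
  · rcases v with b | q
    · rw [mem_neighborSet, pendantCycle_adj_inl_inl] at huw hvw huw' hvw'
      exact congrArg _ (cycle_fourCycleFree hk (fun h => huv (congrArg _ h))
        ⟨huw, hvw⟩ ⟨huw', hvw'⟩)
    · rw [mem_neighborSet, pendantCycle_adj_inr_left] at hvw hvw'
      exact hvw.trans hvw'.symm
  · rw [mem_neighborSet, pendantCycle_adj_inr_left] at huw huw'
    exact huw.trans huw'.symm

lemma pendantCycle_eq_of_closedNbhd_subset (hk : 4 ≤ k) {w : ZMod k ⊕ P}
    (h : (pendantCycle k P).closedNbhd (.inl i) ⊆ (pendantCycle k P).closedNbhd w) :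
    .inl i = w := by
  rcases w with j | p
  · rw [cycle_eq_of_closedNbhd_subset hk (i := i) (j := j) (by
      simpa only [preimage_inl_pendantCycle_closedNbhd] using Set.preimage_mono (f := Sum.inl) h)]
  · have adj_eq : ∀ x, (cycle k).Adj i x → x = p.1 := fun x hx => by
      rcases h (Set.mem_insert_of_mem _ (pendantCycle_adj_inl_inl.2 hx)) with h' | h'
      · cases h'
      · exact Sum.inl_injective (pendantCycle_adj_inr_left.1 h')
    have h2 : (2 : ZMod k) ≠ 0 := by exact_mod_cast ZMod.natCast_ne_zero_of_lt two_pos (by omega)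
    have hm := adj_eq (i - 1) ((cycle_adj (by omega)).2 (Or.inl rfl))
    have hp := adj_eq (i + 1) ((cycle_adj (by omega)).2 (Or.inr rfl))
    exact absurd (by linear_combination hp - hm) h2

lemma pendantCycle_closedNbhd_inter_nonempty_iff :
    ((pendantCycle k P).closedNbhd (.inl i) ∩ (pendantCycle k P).closedNbhd (.inl j)).Nonempty ↔
      ((cycle k).closedNbhd i ∩ (cycle k).closedNbhd j).Nonempty := by
  rw [← preimage_inl_pendantCycle_closedNbhd (P := P),
    ← preimage_inl_pendantCycle_closedNbhd (P := P)]
  refine ⟨?_, fun ⟨x, hx⟩ => ⟨.inl x, hx⟩⟩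
  rintro ⟨x | p, hi, hj⟩
  · exact ⟨x, hi, hj⟩
  · rw [inr_mem_pendantCycle_closedNbhd] at hi hj
    exact ⟨i, Set.mem_insert _ _, hi ▸ hj ▸ Set.mem_insert _ _⟩

lemma isBiclique_pendantCycle_iff (hk : 5 ≤ k) {S : Set (ZMod k ⊕ P)} :
    IsBiclique (pendantCycle k P) S ↔ ∃ i, S = (pendantCycle k P).closedNbhd (.inl i) := by
  have h3 := pendantCycle_cliqueFree_three (P := P) (by omega : 4 ≤ k)
  have hG := pendantCycle_fourCycleFree (P := P) hk
  have hnbhd : ∀ i, ((pendantCycle k P).neighborSet (.inl i)).Nonempty := fun i =>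
    ⟨.inl (i + 1), pendantCycle_adj_inl_inl.2 ((cycle_adj (by omega)).2 (Or.inr rfl))⟩
  constructor
  · intro hS
    obtain ⟨v | p, rfl⟩ := hS.exists_eq_closedNbhd h3 hG
    · exact ⟨v, rfl⟩
    · exact ⟨p, hS.2 _ (isCompleteBipartiteSet_closedNbhd h3 (hnbhd p))
        (pendantCycle_closedNbhd_inr_subset p)⟩
  · rintro ⟨i, rfl⟩
    exact isBiclique_closedNbhd h3 hG (hnbhd i)
      fun _ => pendantCycle_eq_of_closedNbhd_subset (by omega)

end PendantCycle

/-- For `k ≥ 7`, attaching at most one pendant vertex to each cycle vertex does not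
change the biclique graph: `KB(H) ≅ KB(C_k)`. -/
theorem stmt_14 (k : ℕ) (hk : 7 ≤ k) (P : Set (ZMod k)) :
    Nonempty (KB (pendantCycle k P) ≃g KB (cycle k)) :=
  nonempty_KB_iso_of_parametrization
    (fun _ _ h => Sum.inl_injective (pendantCycle_eq_of_closedNbhd_subset (by omega) h.le))
    (fun _ _ h => cycle_eq_of_closedNbhd_subset (by omega) h.le)
    (fun _ => isBiclique_pendantCycle_iff (by omega)) (fun _ => isBiclique_cycle_iff (by omega))
    (fun _ _ => pendantCycle_closedNbhd_inter_nonempty_iff)
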